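/- Let H be a complex Hilbert space, B, C ∈ B(H), β ≥ 0, and let r ≥ 1 be a real number. Set γ₁ = (2β+1)/(β+1) and γ₂ = (2β+3)/(β+1). Let 𝕋 be the operator on H ⊕ H given by 𝕋(x, y) = (B y, C x). Then ω(𝕋)^{4r} ≤ (γ₁/16)·max{ ‖ |C|^{2r} + |B*|^{2r} ‖², ‖ |B|^{2r} + |C*|^{2r} ‖² } + (γ₂/8)·max{ ‖ |C|^{2r} + |B*|^{2r} ‖, ‖ |B|^{2r} + |C*|^{2r} ‖ }·max{ ω(BC)^r, ω(CB)^r }, where |A|^{2r} denotes the real power of the positive operator |A| defined via the continuous functional calculus. -/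

import Mathlib

open ContinuousLinearMap in
/-- The numerical radius `ω(A) = sup { |⟨A x, x⟩| : ‖x‖ = 1 }` of a bounded operator. -/
noncomputable def numRad {H : Type*} [NormedAddCommGroup H] [InnerProductSpace ℂ H]
    (A : H →L[ℂ] H) : ℝ :=
  sSup {t : ℝ | ∃ x : H, ‖x‖ = 1 ∧ t = ‖(inner ℂ (A x) x : ℂ)‖}

/-- The absolute value `|A| = (A*A)^{1/2}` of a bounded operator, via the continuous
functional calculus. -/
noncomputable def absOp {E F : Type*} [NormedAddCommGroup E] [InnerProductSpace ℂ E]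
    [CompleteSpace E] [NormedAddCommGroup F] [InnerProductSpace ℂ F] [CompleteSpace F]
    (A : E →L[ℂ] F) : E →L[ℂ] E :=
  cfc Real.sqrt ((ContinuousLinearMap.adjoint A).comp A)

open ContinuousLinearMap

/-!
For a unit vector `z`, Buzano's inequality with `a = T z`, `b = T† z` gives
`|⟪T z, z⟫|² ≤ (‖T z‖ ‖T† z‖ + |⟪T² z, z⟫|) / 2`. Raise this to the power `r` by convexity and use
`(‖T z‖ ‖T† z‖)^r ≤ (‖T z‖^(2r) + ‖T† z‖^(2r)) / 2`. Writing `z = (x, y)`, we have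
`‖T z‖² = ‖C x‖² + ‖B y‖²` and `‖T† z‖² = ‖B† x‖² + ‖C† y‖²`, and McCarthy's inequality
`⟪P u, u⟫^r ≤ ⟪P^r u, u⟫` (for `P ≥ 0`, `r ≥ 1`) with `P = |C|², |B|², |B†|², |C†|²` bounds
`‖T z‖^(2r) + ‖T† z‖^(2r)` by `D = max ‖|C|^(2r) + |B†|^(2r)‖ ‖|B|^(2r) + |C†|^(2r)‖`. Hence
`ω(T)^(2r) ≤ D/4 + w/2` with `w = ω(T²)^r ≤ D/2`, and `w ≤ max (ω(BC)^r) (ω(CB)^r)` because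
`T² = diag(BC, CB)`. Finally `(D/4 + w/2)² ≤ γ₁ D²/16 + γ₂ D w/8`, since the difference is
`(β (D² - 4w²) + 2w (D - 2w)) / (16 (β + 1)) ≥ 0`.
-/

open RCLike
open scoped InnerProductSpace

lemma Real.rpow_tangent_le {p a t : ℝ} (hp : 1 ≤ p) (ha : 0 < a) (ht : 0 ≤ t) :
    a ^ p + p * a ^ (p - 1) * (t - a) ≤ t ^ p := by
  have h := one_add_mul_self_le_rpow_one_add (s := t / a - 1) (by linarith [div_nonneg ht ha.le]) hp
  rw [add_sub_cancel, Real.div_rpow ht ha.le] at h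
  have hap : 0 < a ^ p := Real.rpow_pos_of_pos ha p
  calc a ^ p + p * a ^ (p - 1) * (t - a) = a ^ p * (1 + p * (t / a - 1)) := by
        rw [Real.rpow_sub_one ha.ne']; field_simp
    _ ≤ a ^ p * (t ^ p / a ^ p) := by gcongr
    _ = t ^ p := by field_simp

lemma Real.mul_rpow_le_add_rpow_two_mul_div_two {a b : ℝ} (ha : 0 ≤ a) (hb : 0 ≤ b) (r : ℝ) :
    (a * b) ^ r ≤ (a ^ (2 * r) + b ^ (2 * r)) / 2 := by
  rw [Real.mul_rpow ha hb, mul_comm 2 r, Real.rpow_mul ha, Real.rpow_mul hb, Real.rpow_two,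
    Real.rpow_two]
  nlinarith [sq_nonneg (a ^ r - b ^ r)]

lemma Real.add_div_two_rpow_le {p a b : ℝ} (hp : 1 ≤ p) (ha : 0 ≤ a) (hb : 0 ≤ b) :
    ((a + b) / 2) ^ p ≤ (a ^ p + b ^ p) / 2 := by
  have h := (convexOn_rpow hp).2 ha hb (by norm_num : (0 : ℝ) ≤ 1 / 2)
    (by norm_num : (0 : ℝ) ≤ 1 / 2) (by norm_num)
  simp only [smul_eq_mul] at h
  calc ((a + b) / 2) ^ p = (1 / 2 * a + 1 / 2 * b) ^ p := by ring_nf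
    _ ≤ 1 / 2 * a ^ p + 1 / 2 * b ^ p := h
    _ = (a ^ p + b ^ p) / 2 := by ring

lemma sq_quarter_add_half_le {β D w m : ℝ} (hβ : 0 ≤ β) (hw : 0 ≤ w) (hwD : w ≤ D / 2)
    (hwm : w ≤ m) :
    (D / 4 + w / 2) ^ 2
      ≤ (2 * β + 1) / (β + 1) / 16 * D ^ 2 + (2 * β + 3) / (β + 1) / 8 * D * m := by
  have hβ1 : 0 < β + 1 := by linarith
  have hD : 0 ≤ D := by linarith
  calc (D / 4 + w / 2) ^ 2
      ≤ (2 * β + 1) / (β + 1) / 16 * D ^ 2 + (2 * β + 3) / (β + 1) / 8 * D * w := by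
        have hdiff : (2 * β + 1) / (β + 1) / 16 * D ^ 2 + (2 * β + 3) / (β + 1) / 8 * D * w
            - (D / 4 + w / 2) ^ 2
            = (β * ((D - 2 * w) * (D + 2 * w)) + 2 * w * (D - 2 * w)) / (16 * (β + 1)) := by
          field_simp
          ring
        have : 0 ≤ D - 2 * w := by linarith
        rw [← sub_nonneg, hdiff]
        positivity
    _ ≤ _ := add_le_add_right (mul_le_mul_of_nonneg_left hwm (mul_nonneg (by positivity) hD)) _

-- Buzano's inequality.
lemma norm_inner_mul_norm_inner_le {𝕜 E : Type*} [RCLike 𝕜] [NormedAddCommGroup E]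
    [InnerProductSpace 𝕜 E] {e : E} (he : ‖e‖ = 1) (a b : E) :
    ‖⟪a, e⟫_𝕜‖ * ‖⟪e, b⟫_𝕜‖ ≤ (‖a‖ * ‖b‖ + ‖⟪a, b⟫_𝕜‖) / 2 := by
  set v := (𝕜 ∙ e).reflection a
  have hv : ⟪v, b⟫_𝕜 = 2 * (⟪a, e⟫_𝕜 * ⟪e, b⟫_𝕜) - ⟪a, b⟫_𝕜 := by
    simp only [v, Submodule.reflection_apply, Submodule.starProjection_unit_singleton 𝕜 he,
      two_smul, inner_sub_left, inner_add_left, inner_smul_left, inner_conj_symm]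
    ring
  have hsum : 2 * (‖⟪a, e⟫_𝕜‖ * ‖⟪e, b⟫_𝕜‖) ≤ ‖⟪v, b⟫_𝕜‖ + ‖⟪a, b⟫_𝕜‖ :=
    calc 2 * (‖⟪a, e⟫_𝕜‖ * ‖⟪e, b⟫_𝕜‖) = ‖⟪v, b⟫_𝕜 + ⟪a, b⟫_𝕜‖ := by
          rw [hv, sub_add_cancel, norm_mul, norm_mul, RCLike.norm_two]
      _ ≤ _ := norm_add_le _ _
  have hvb : ‖⟪v, b⟫_𝕜‖ ≤ ‖a‖ * ‖b‖ :=
    (norm_inner_le_norm v b).trans_eq (by rw [LinearIsometryEquiv.norm_map])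
  linarith

section NumericalRadius

variable {E : Type*} [NormedAddCommGroup E] [InnerProductSpace ℂ E] (A : E →L[ℂ] E)

lemma numRad_nonneg : 0 ≤ numRad A :=
  Real.sSup_nonneg (by rintro t ⟨x, -, rfl⟩; positivity)

lemma norm_inner_le_numRad {x : E} (hx : ‖x‖ = 1) : ‖⟪A x, x⟫_ℂ‖ ≤ numRad A := by
  refine le_csSup ⟨‖A‖, ?_⟩ ⟨x, hx, rfl⟩
  rintro t ⟨y, hy, rfl⟩
  simpa [hy] using norm_inner_le_norm (𝕜 := ℂ) (A y) y |>.trans (by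
    simpa [hy] using A.le_opNorm y)

lemma norm_inner_le_numRad_mul_sq (x : E) : ‖⟪A x, x⟫_ℂ‖ ≤ numRad A * ‖x‖ ^ 2 := by
  rcases eq_or_ne x 0 with rfl | hx
  · simp
  have hx' : ‖x‖ ≠ 0 := norm_ne_zero_iff.2 hx
  have key := norm_inner_le_numRad A (norm_smul_inv_norm (𝕜 := ℂ) hx)
  rw [map_smul, inner_smul_left, inner_smul_right, norm_mul, norm_mul] at key
  simp only [Complex.coe_algebraMap, map_inv₀, Complex.conj_ofReal, norm_inv, Complex.norm_real,
    norm_norm] at key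
  field_simp at key
  linarith

lemma numRad_rpow_le_of_forall {p c : ℝ} (hp : 0 < p) (hc : 0 ≤ c)
    (h : ∀ x : E, ‖x‖ = 1 → ‖⟪A x, x⟫_ℂ‖ ^ p ≤ c) : numRad A ^ p ≤ c := by
  rw [← Real.le_rpow_inv_iff_of_pos (numRad_nonneg A) hc hp]
  refine Real.sSup_le ?_ (by positivity)
  rintro t ⟨x, hx, rfl⟩
  exact (Real.le_rpow_inv_iff_of_pos (norm_nonneg _) hc hp).2 (h x hx)

lemma re_inner_le_norm_mul_sq (x : E) : re ⟪A x, x⟫_ℂ ≤ ‖A‖ * ‖x‖ ^ 2 :=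
  calc re ⟪A x, x⟫_ℂ ≤ ‖A x‖ * ‖x‖ := re_inner_le_norm _ _
    _ ≤ ‖A‖ * ‖x‖ * ‖x‖ := by gcongr; exact A.le_opNorm x
    _ = ‖A‖ * ‖x‖ ^ 2 := by ring

lemma re_inner_le_re_inner_of_le {S S' : E →L[ℂ] E} (h : S ≤ S') (x : E) :
    re ⟪S x, x⟫_ℂ ≤ re ⟪S' x, x⟫_ℂ := by
  simpa [inner_sub_left] using ((le_def S S').mp h).re_inner_nonneg_left x

end NumericalRadius

section McCarthy

variable {E F G : Type*} [NormedAddCommGroup E] [InnerProductSpace ℂ E] [CompleteSpace E]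
  [NormedAddCommGroup F] [InnerProductSpace ℂ F] [CompleteSpace F]
  [NormedAddCommGroup G] [InnerProductSpace ℂ G] [CompleteSpace G]

lemma tangent_le_re_inner_cfc_rpow {p a : ℝ} (hp : 1 ≤ p) (ha : 0 < a) {P : E →L[ℂ] E}
    (hP : 0 ≤ P) (x : E) :
    a ^ p * ‖x‖ ^ 2 + p * a ^ (p - 1) * (re ⟪P x, x⟫_ℂ - a * ‖x‖ ^ 2)
      ≤ re ⟪cfc (· ^ p : ℝ → ℝ) P x, x⟫_ℂ := by
  have hP' : IsSelfAdjoint P := .of_nonneg hP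
  have hmono : algebraMap ℝ (E →L[ℂ] E) (a ^ p - p * a ^ (p - 1) * a) + (p * a ^ (p - 1)) • P
      ≤ cfc (· ^ p : ℝ → ℝ) P := by
    rw [← cfc_const_mul_id _ P, ← cfc_const_add _ _ P]
    refine cfc_mono (fun t ht => ?_) (hg := (Real.continuous_rpow_const (by linarith)).continuousOn)
    linarith [Real.rpow_tangent_le hp ha (spectrum_nonneg_of_nonneg hP ht)]
  have h := re_inner_le_re_inner_of_le hmono x
  rw [add_apply, Algebra.algebraMap_eq_smul_one, smul_apply, smul_apply, one_apply_eq_self,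
    inner_add_left, real_smul_eq_coe_smul (K := ℂ), real_smul_eq_coe_smul (K := ℂ),
    inner_smul_left, inner_smul_left, conj_ofReal, conj_ofReal, map_add, re_ofReal_mul,
    re_ofReal_mul, inner_self_eq_norm_sq] at h
  linarith

-- McCarthy's inequality for two vectors: both operators lie above the tangent of `t ↦ t ^ p`
-- at the joint mean `a`.
lemma rpow_re_inner_add_le {p : ℝ} (hp : 1 ≤ p) {P : E →L[ℂ] E} {Q : F →L[ℂ] F} (hP : 0 ≤ P)
    (hQ : 0 ≤ Q) {x : E} {y : F} (hxy : ‖x‖ ^ 2 + ‖y‖ ^ 2 = 1) :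
    (re ⟪P x, x⟫_ℂ + re ⟪Q y, y⟫_ℂ) ^ p
      ≤ re ⟪cfc (· ^ p : ℝ → ℝ) P x, x⟫_ℂ + re ⟪cfc (· ^ p : ℝ → ℝ) Q y, y⟫_ℂ := by
  have hP' := (nonneg_iff_isPositive P).mp hP
  have hQ' := (nonneg_iff_isPositive Q).mp hQ
  rcases (add_nonneg (hP'.re_inner_nonneg_left x) (hQ'.re_inner_nonneg_left y)).eq_or_lt
    with ha | ha
  · rw [← ha, Real.zero_rpow (by linarith)]
    have hPp : 0 ≤ cfc (· ^ p : ℝ → ℝ) P :=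
      cfc_nonneg fun t ht => Real.rpow_nonneg (spectrum_nonneg_of_nonneg hP ht) p
    have hQp : 0 ≤ cfc (· ^ p : ℝ → ℝ) Q :=
      cfc_nonneg fun t ht => Real.rpow_nonneg (spectrum_nonneg_of_nonneg hQ ht) p
    exact add_nonneg (((nonneg_iff_isPositive _).mp hPp).re_inner_nonneg_left x)
      (((nonneg_iff_isPositive _).mp hQp).re_inner_nonneg_left y)
  · set a := re ⟪P x, x⟫_ℂ + re ⟪Q y, y⟫_ℂ with ha_def
    calc a ^ p = a ^ p * ‖x‖ ^ 2 + p * a ^ (p - 1) * (re ⟪P x, x⟫_ℂ - a * ‖x‖ ^ 2)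
          + (a ^ p * ‖y‖ ^ 2 + p * a ^ (p - 1) * (re ⟪Q y, y⟫_ℂ - a * ‖y‖ ^ 2)) := by
          linear_combination (p * a ^ (p - 1) * a - a ^ p) * hxy - p * a ^ (p - 1) * ha_def
      _ ≤ _ := add_le_add (tangent_le_re_inner_cfc_rpow hp ha hP x)
          (tangent_le_re_inner_cfc_rpow hp ha hQ y)

lemma cfc_rpow_two_mul_absOp {r : ℝ} (hr : 0 ≤ r) (A : E →L[ℂ] F) :
    cfc (· ^ (2 * r) : ℝ → ℝ) (absOp A) = cfc (· ^ r : ℝ → ℝ) (adjoint A ∘L A) := by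
  have hA : 0 ≤ adjoint A ∘L A := (nonneg_iff_isPositive _).mpr A.isPositive_adjoint_comp_self
  rw [absOp, ← cfc_comp' (hg := (Real.continuous_rpow_const (by positivity)).continuousOn)]
  refine cfc_congr fun t ht => ?_
  rw [Real.rpow_mul (Real.sqrt_nonneg t), Real.rpow_two,
    Real.sq_sqrt (spectrum_nonneg_of_nonneg hA ht)]

lemma norm_sq_add_rpow_le {r : ℝ} (hr : 1 ≤ r) (A₁ : E →L[ℂ] G) (A₂ : F →L[ℂ] G) {x : E} {y : F}
    (hxy : ‖x‖ ^ 2 + ‖y‖ ^ 2 = 1) :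
    (‖A₁ x‖ ^ 2 + ‖A₂ y‖ ^ 2) ^ r
      ≤ re ⟪cfc (· ^ (2 * r) : ℝ → ℝ) (absOp A₁) x, x⟫_ℂ
        + re ⟪cfc (· ^ (2 * r) : ℝ → ℝ) (absOp A₂) y, y⟫_ℂ := by
  rw [cfc_rpow_two_mul_absOp (by linarith), cfc_rpow_two_mul_absOp (by linarith),
    apply_norm_sq_eq_inner_adjoint_left, apply_norm_sq_eq_inner_adjoint_left]
  exact rpow_re_inner_add_le hr ((nonneg_iff_isPositive _).mpr A₁.isPositive_adjoint_comp_self)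
    ((nonneg_iff_isPositive _).mpr A₂.isPositive_adjoint_comp_self) hxy

end McCarthy

section PowerBound

variable {E : Type*} [NormedAddCommGroup E] [InnerProductSpace ℂ E] [CompleteSpace E]
  (A : E →L[ℂ] E)

lemma norm_inner_sq_le {z : E} (hz : ‖z‖ = 1) :
    ‖⟪A z, z⟫_ℂ‖ ^ 2 ≤ (‖A z‖ * ‖adjoint A z‖ + ‖⟪(A * A) z, z⟫_ℂ‖) / 2 := by
  have h := norm_inner_mul_norm_inner_le (𝕜 := ℂ) hz (A z) (adjoint A z)
  rwa [adjoint_inner_right, adjoint_inner_right, ← sq] at h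

lemma norm_inner_mul_self_le (z : E) : ‖⟪(A * A) z, z⟫_ℂ‖ ≤ ‖A z‖ * ‖adjoint A z‖ := by
  calc ‖⟪(A * A) z, z⟫_ℂ‖ = ‖⟪A z, adjoint A z⟫_ℂ‖ := by rw [adjoint_inner_right]; rfl
    _ ≤ _ := norm_inner_le_norm _ _

variable {r D : ℝ} (hD : ∀ z : E, ‖z‖ = 1 → ‖A z‖ ^ (2 * r) + ‖adjoint A z‖ ^ (2 * r) ≤ D)
include hD

lemma numRad_mul_self_rpow_le (hr : 0 < r) (hD₀ : 0 ≤ D) : numRad (A * A) ^ r ≤ D / 2 := by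
  refine numRad_rpow_le_of_forall _ hr (by positivity) fun z hz => ?_
  calc ‖⟪(A * A) z, z⟫_ℂ‖ ^ r ≤ (‖A z‖ * ‖adjoint A z‖) ^ r := by
        gcongr; exact norm_inner_mul_self_le A z
    _ ≤ _ := (Real.mul_rpow_le_add_rpow_two_mul_div_two (norm_nonneg _) (norm_nonneg _) r).trans
        (by linarith [hD z hz])

lemma numRad_rpow_two_mul_le (hr : 1 ≤ r) (hD₀ : 0 ≤ D) :
    numRad A ^ (2 * r) ≤ D / 4 + numRad (A * A) ^ r / 2 := by
  refine numRad_rpow_le_of_forall _ (by positivity) (by positivity [numRad_nonneg (A * A)])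
    fun z hz => ?_
  have hN := (Real.mul_rpow_le_add_rpow_two_mul_div_two (norm_nonneg (A z))
    (norm_nonneg (adjoint A z)) r).trans (by linarith [hD z hz] : _ ≤ D / 2)
  have hV : ‖⟪(A * A) z, z⟫_ℂ‖ ^ r ≤ numRad (A * A) ^ r := by
    gcongr; exact norm_inner_le_numRad _ hz
  calc ‖⟪A z, z⟫_ℂ‖ ^ (2 * r) = (‖⟪A z, z⟫_ℂ‖ ^ 2) ^ r := by
        rw [Real.rpow_mul (norm_nonneg _), Real.rpow_two]
    _ ≤ ((‖A z‖ * ‖adjoint A z‖ + ‖⟪(A * A) z, z⟫_ℂ‖) / 2) ^ r := by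
        gcongr; exact norm_inner_sq_le A hz
    _ ≤ ((‖A z‖ * ‖adjoint A z‖) ^ r + ‖⟪(A * A) z, z⟫_ℂ‖ ^ r) / 2 :=
        Real.add_div_two_rpow_le hr (by positivity) (norm_nonneg _)
    _ ≤ D / 4 + numRad (A * A) ^ r / 2 := by linarith

theorem numRad_rpow_four_mul_le {β m : ℝ} (hβ : 0 ≤ β) (hr : 1 ≤ r) (hD₀ : 0 ≤ D)
    (hm : numRad (A * A) ^ r ≤ m) :
    numRad A ^ (4 * r)
      ≤ (2 * β + 1) / (β + 1) / 16 * D ^ 2 + (2 * β + 3) / (β + 1) / 8 * D * m := by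
  calc numRad A ^ (4 * r) = (numRad A ^ (2 * r)) ^ 2 := by
        rw [← Real.rpow_two, ← Real.rpow_mul (numRad_nonneg A)]; ring_nf
    _ ≤ (D / 4 + numRad (A * A) ^ r / 2) ^ 2 := by
        gcongr
        · exact Real.rpow_nonneg (numRad_nonneg A) _
        · exact numRad_rpow_two_mul_le A hD hr hD₀
    _ ≤ _ := sq_quarter_add_half_le hβ (Real.rpow_nonneg (numRad_nonneg _) r)
        (numRad_mul_self_rpow_le A hD (by linarith) hD₀) hm

end PowerBound

section OffDiagonal

variable {H : Type*} [NormedAddCommGroup H] [InnerProductSpace ℂ H]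
  {B C : H →L[ℂ] H} {T : WithLp 2 (H × H) →L[ℂ] WithLp 2 (H × H)}
  (hT : ∀ x y : H,
    T ((WithLp.equiv 2 (H × H)).symm (x, y)) = (WithLp.equiv 2 (H × H)).symm (B y, C x))
include hT

lemma offDiag_apply (z : WithLp 2 (H × H)) : T z = WithLp.toLp 2 (B z.snd, C z.fst) :=
  hT z.fst z.snd

lemma offDiag_numRad_mul_self_rpow_le {r : ℝ} (hr : 1 ≤ r) :
    numRad (T * T) ^ r ≤ max (numRad (B * C) ^ r) (numRad (C * B) ^ r) := by
  refine numRad_rpow_le_of_forall _ (by linarith)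
    (le_max_of_le_left (Real.rpow_nonneg (numRad_nonneg _) r)) fun z hz => ?_
  have hxy : ‖z.fst‖ ^ 2 + ‖z.snd‖ ^ 2 = 1 := by
    rw [← WithLp.prod_norm_sq_eq_of_L2, hz, one_pow]
  have hTT : ⟪(T * T) z, z⟫_ℂ = ⟪(B * C) z.fst, z.fst⟫_ℂ + ⟪(C * B) z.snd, z.snd⟫_ℂ := by
    simp [offDiag_apply hT]
  calc ‖⟪(T * T) z, z⟫_ℂ‖ ^ r
      ≤ (‖z.fst‖ ^ 2 * numRad (B * C) + ‖z.snd‖ ^ 2 * numRad (C * B)) ^ r := by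
        gcongr
        rw [hTT]
        refine (norm_add_le _ _).trans ?_
        rw [mul_comm (‖z.fst‖ ^ 2), mul_comm (‖z.snd‖ ^ 2)]
        exact add_le_add (norm_inner_le_numRad_mul_sq _ _) (norm_inner_le_numRad_mul_sq _ _)
    _ ≤ ‖z.fst‖ ^ 2 * numRad (B * C) ^ r + ‖z.snd‖ ^ 2 * numRad (C * B) ^ r :=
        (convexOn_rpow hr).2 (numRad_nonneg _) (numRad_nonneg _) (by positivity) (by positivity)
          hxy
    _ ≤ ‖z.fst‖ ^ 2 * max (numRad (B * C) ^ r) (numRad (C * B) ^ r)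
          + ‖z.snd‖ ^ 2 * max (numRad (B * C) ^ r) (numRad (C * B) ^ r) := by
        gcongr
        exacts [le_max_left _ _, le_max_right _ _]
    _ = _ := by rw [← add_mul, hxy, one_mul]

variable [CompleteSpace H]

lemma offDiag_adjoint_apply (z : WithLp 2 (H × H)) :
    adjoint T z = WithLp.toLp 2 (adjoint C z.snd, adjoint B z.fst) :=
  ext_inner_right ℂ fun u => by simp [adjoint_inner_left, offDiag_apply hT, add_comm]

lemma offDiag_norm_rpow_add_le {r : ℝ} (hr : 1 ≤ r) {z : WithLp 2 (H × H)} (hz : ‖z‖ = 1) :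
    ‖T z‖ ^ (2 * r) + ‖adjoint T z‖ ^ (2 * r)
      ≤ max ‖cfc (fun t : ℝ => t ^ (2 * r)) (absOp C)
              + cfc (fun t : ℝ => t ^ (2 * r)) (absOp (adjoint B))‖
            ‖cfc (fun t : ℝ => t ^ (2 * r)) (absOp B)
              + cfc (fun t : ℝ => t ^ (2 * r)) (absOp (adjoint C))‖ := by
  have hxy : ‖z.fst‖ ^ 2 + ‖z.snd‖ ^ 2 = 1 := by
    rw [← WithLp.prod_norm_sq_eq_of_L2, hz, one_pow]
  have hTz : ‖T z‖ ^ 2 = ‖C z.fst‖ ^ 2 + ‖B z.snd‖ ^ 2 := by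
    rw [WithLp.prod_norm_sq_eq_of_L2, offDiag_apply hT, add_comm]; rfl
  have hTz' : ‖adjoint T z‖ ^ 2 = ‖adjoint B z.fst‖ ^ 2 + ‖adjoint C z.snd‖ ^ 2 := by
    rw [WithLp.prod_norm_sq_eq_of_L2, offDiag_adjoint_apply hT, add_comm]; rfl
  set K₁ := cfc (fun t : ℝ => t ^ (2 * r)) (absOp C)
  set K₂ := cfc (fun t : ℝ => t ^ (2 * r)) (absOp (adjoint B))
  set K₃ := cfc (fun t : ℝ => t ^ (2 * r)) (absOp B)
  set K₄ := cfc (fun t : ℝ => t ^ (2 * r)) (absOp (adjoint C))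
  have hx := re_inner_le_norm_mul_sq (K₁ + K₂) z.fst
  have hy := re_inner_le_norm_mul_sq (K₃ + K₄) z.snd
  rw [add_apply, inner_add_left, map_add] at hx hy
  rw [Real.rpow_mul (norm_nonneg _), Real.rpow_mul (norm_nonneg _), Real.rpow_two, Real.rpow_two,
    hTz, hTz']
  calc _ ≤ ‖K₁ + K₂‖ * ‖z.fst‖ ^ 2 + ‖K₃ + K₄‖ * ‖z.snd‖ ^ 2 := by
        linarith [norm_sq_add_rpow_le hr C B hxy,
          norm_sq_add_rpow_le hr (adjoint B) (adjoint C) hxy]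
    _ ≤ max ‖K₁ + K₂‖ ‖K₃ + K₄‖ * ‖z.fst‖ ^ 2 + max ‖K₁ + K₂‖ ‖K₃ + K₄‖ * ‖z.snd‖ ^ 2 := by
        gcongr
        exacts [le_max_left _ _, le_max_right _ _]
    _ = _ := by rw [← mul_add, hxy, mul_one]

end OffDiagonal

/-- Theorem `Ramadan1`: `4r`-th power numerical radius bound for the off-diagonal operator
matrix `[[0, B], [C, 0]]`, with `γ₁ = (2β+1)/(β+1)` and `γ₂ = (2β+3)/(β+1)`. -/
theorem offdiag_numRad_pow_four_r {H : Type*}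
    [NormedAddCommGroup H] [InnerProductSpace ℂ H] [CompleteSpace H]
    (B C : H →L[ℂ] H) (β : ℝ) (hβ : 0 ≤ β) (r : ℝ) (hr : 1 ≤ r)
    (T : WithLp 2 (H × H) →L[ℂ] WithLp 2 (H × H))
    (hT : ∀ x y : H,
      T ((WithLp.equiv 2 (H × H)).symm (x, y)) = (WithLp.equiv 2 (H × H)).symm (B y, C x)) :
    numRad T ^ (4 * r) ≤
      (2 * β + 1) / (β + 1) / 16
          * max (‖cfc (fun t : ℝ => t ^ (2 * r)) (absOp C)
                  + cfc (fun t : ℝ => t ^ (2 * r)) (absOp (adjoint B))‖ ^ 2)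
                (‖cfc (fun t : ℝ => t ^ (2 * r)) (absOp B)
                  + cfc (fun t : ℝ => t ^ (2 * r)) (absOp (adjoint C))‖ ^ 2)
        + (2 * β + 3) / (β + 1) / 8
          * max (‖cfc (fun t : ℝ => t ^ (2 * r)) (absOp C)
                  + cfc (fun t : ℝ => t ^ (2 * r)) (absOp (adjoint B))‖)
                (‖cfc (fun t : ℝ => t ^ (2 * r)) (absOp B)
                  + cfc (fun t : ℝ => t ^ (2 * r)) (absOp (adjoint C))‖)
          * max (numRad (B * C) ^ r) (numRad (C * B) ^ r) := by
  rw [← (pow_left_monotoneOn (n := 2)).map_max (norm_nonneg _) (norm_nonneg _)]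
  exact numRad_rpow_four_mul_le T (fun z hz => offDiag_norm_rpow_add_le hT hr hz) hβ hr
    (le_max_of_le_left (norm_nonneg _))
    (offDiag_numRad_mul_self_rpow_le hT hr)
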